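/- Suppose an irreducible E_{f,q} has dual Puiseux characteristic (q, p; β₁, …, β_g). Then F^{(0,∞)}(E_{f,q}) ≅ E_{g,p+q} has dual Puiseux characteristic (p+q, β₁; β₁, …, β_g) if p = β₁, and (p+q, p; p, β₁, …, β_g) otherwise. -/

import Mathlib

/-- The conjugate `F(c·t)` of a formal Laurent series `F(t)`:
the `n`-th coefficient is multiplied by `c^n` (with `zpow` in the field `K`). -/
noncomputable def LaurentSeries.conjRoot {K : Type*} [Field K] (c : K) (F : LaurentSeries K) :
    LaurentSeries K where
  coeff n := c ^ n * F.coeff n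
  isPWO_support' := F.isPWO_support.mono (fun n hn => by
    simp only [Function.mem_support] at hn ⊢
    exact fun h => hn (by simp [h]))

/-- The ring homomorphism `K[[x]] → K((t))` sending `x` to `t^N` (for `N > 0`). -/
noncomputable def xpowHom (K : Type*) [Field K] (N : ℕ) (hN : 0 < N) :
    PowerSeries K →+* LaurentSeries K :=
  (HahnSeries.embDomainRingHom (AddMonoidHom.mk' (fun n : ℤ => (N : ℤ) * n) (by intro a b; ring))
    (fun a b h => mul_left_cancel₀ (show (N : ℤ) ≠ 0 by exact_mod_cast hN.ne') h)
    (fun g g' => mul_le_mul_iff_right₀ (show (0 : ℤ) < (N : ℤ) by exact_mod_cast hN))).comp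
    (HahnSeries.ofPowerSeries ℤ K)

/-- `DualChar q supp g β e` : the Laurent series (in `t = x^{1/q}`) with support `supp ⊆ ℤ`
has dual Puiseux characteristic `(q, -; β 1, …, β g)` with gcd sequence `e 0 = q, …, e g = 1`:
for each `k < g`, `-β (k+1)` is the least exponent in the support not divisible by `e k`,
and `e (k+1) = gcd (e k) (β (k+1))`. -/
def DualChar (q : ℕ) (supp : ℤ → Prop) (g : ℕ) (β : ℕ → ℕ) (e : ℕ → ℕ) : Prop :=
  e 0 = q ∧ e g = 1 ∧ ∀ k < g,
    supp (-(β (k + 1) : ℤ)) ∧ ¬ ((e k : ℤ) ∣ (β (k + 1) : ℤ)) ∧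
    (∀ i : ℤ, supp i → ¬ ((e k : ℤ) ∣ i) → -(β (k + 1) : ℤ) ≤ i) ∧
    e (k + 1) = Nat.gcd (e k) (β (k + 1))

/-- `PCharZ m supp g β e` : the Puiseux characteristic `(m; β 1, …, β g)` of a
parametrization `x = t^m`, `y = ∑ c_i t^i` with support `supp ⊆ ℤ`:
for each `k < g`, `β (k+1)` is the least exponent in the support not divisible by
`e k`, with gcd sequence `e 0 = m`, `e (k+1) = gcd (e k) (β (k+1))`, `e g = 1`. -/
def PCharZ (m : ℕ) (supp : ℤ → Prop) (g : ℕ) (β : ℕ → ℕ) (e : ℕ → ℕ) : Prop :=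
  e 0 = m ∧ e g = 1 ∧ ∀ k < g,
    supp (β (k + 1) : ℤ) ∧ ¬ ((e k : ℤ) ∣ (β (k + 1) : ℤ)) ∧
    (∀ i : ℤ, supp i → ¬ ((e k : ℤ) ∣ i) → (β (k + 1) : ℤ) ≤ i) ∧
    e (k + 1) = Nat.gcd (e k) (β (k + 1))

/-- `PCharN` : as `PCharZ`, for supports indexed by `ℕ` (power series parametrizations). -/
def PCharN (m : ℕ) (supp : ℕ → Prop) (g : ℕ) (β : ℕ → ℕ) (e : ℕ → ℕ) : Prop :=
  e 0 = m ∧ e g = 1 ∧ ∀ k < g,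
    supp (β (k + 1)) ∧ ¬ (e k ∣ β (k + 1)) ∧
    (∀ i : ℕ, supp i → ¬ (e k ∣ i) → β (k + 1) ≤ i) ∧
    e (k + 1) = Nat.gcd (e k) (β (k + 1))

/-- `RamIrred q N F` : the element `f ∈ K((x^{1/q}))`, expanded as the Laurent series `F`
in the variable `u = x^{1/N}` (where `q ∣ N`), has irreducible associated connection
`E_{f,q}`, i.e. its image in `R_q` cannot be represented by an element of `K((x^{1/d}))`
for any proper divisor `d` of `q`. -/
def RamIrred {K : Type*} [Field K] (q N : ℕ) (F : LaurentSeries K) : Prop :=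
  ∀ d : ℕ, d ∣ q → d < q → ¬ (∀ n : ℤ, n < 0 → F.coeff n ≠ 0 → ((N / d : ℕ) : ℤ) ∣ n)

/-- `Composed S Y Z` says that `Z = Y ∘ S` (substitution of the power series `S`,
assumed to have zero constant term, into `Y`), expressed coefficientwise. -/
def Composed {K : Type*} [Field K] (S Y Z : PowerSeries K) : Prop :=
  ∀ n : ℕ, PowerSeries.coeff n Z =
    ∑ k ∈ Finset.range (n + 1), PowerSeries.coeff k Y * PowerSeries.coeff n (S ^ k)

/-!
With `Yf = 1/F`, `Yg = 1/G` and `S = t·u`, the data say `Yf = Yg ∘ S` and `t^p·u^{p+q} = -Yf`.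
Write `SuppDvdBelow d m x` for `x ∈ K((t^d)) + t^m K[[t]]`. Inverting a series `x` of order
`a` with `d ∣ a` turns `SuppDvdBelow d m` into `SuppDvdBelow d (m - 2a)`, and the boundary
coefficient `-x_m / x_a²` of the inverse is nonzero when `x_m` is. So a characteristic exponent
`-β > -p` of `F` (for which `d = e_k` divides `p`) becomes the boundary exponent `2p - β` of `Yf`.
By extracting a `(p+q)`-th root in characteristic zero, `u` has no exponent prime to `d` below
`p - β`. Computing the coefficient of `t^{2p-β}` in `Yf` once from `Yg ∘ S` and once from
`u^{p+q}`, the two answers would differ by `q·u_0^{p+q}·u_{p-β} ≠ 0` if `Yg` had no such term;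
inverting `Yg` then brings the exponent back to `-β` in `G`. The leading exponent `-p`, shared
by `F` and `G`, is a characteristic exponent of `G` in ramification `p + q`: a new one if
`β₁ < p` (then `q ∣ p`), or the old `β₁ = p` with the same gcd `gcd(p + q, p) = gcd(q, p)`.
-/

namespace HahnSeries

variable {Γ R : Type*}

theorem coeff_mul_eq_mul_of_unique [AddCommMonoid Γ] [PartialOrder Γ] [IsOrderedCancelAddMonoid Γ]
    [NonUnitalNonAssocSemiring R] {x y : HahnSeries Γ R} {i j : Γ}
    (h : ∀ i' j', x.coeff i' ≠ 0 → y.coeff j' ≠ 0 → i' + j' = i + j → i' = i ∧ j' = j) :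
    (x * y).coeff (i + j) = x.coeff i * y.coeff j := by
  rw [coeff_mul]
  refine Finset.sum_eq_single (i, j) (fun ⟨i', j'⟩ hmem hne => ?_) fun hnot => ?_
  · rw [Finset.mem_antidiagonal] at hmem
    obtain ⟨rfl, rfl⟩ := h i' j' hmem.1 hmem.2.1 hmem.2.2
    exact absurd rfl hne
  · by_contra hprod
    exact hnot (Finset.mem_antidiagonal.mpr
      ⟨left_ne_zero_of_mul hprod, right_ne_zero_of_mul hprod, rfl⟩)

theorem order_eq_of_forall_lt [Zero R] [Zero Γ] [LinearOrder Γ] {x : HahnSeries Γ R} {a : Γ}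
    (hlt : ∀ n < a, x.coeff n = 0) (ha : x.coeff a ≠ 0) : x.order = a :=
  (order_le_of_coeff_ne_zero ha).antisymm <| not_lt.mp fun h =>
    (ne_zero_of_coeff_ne_zero ha) (coeff_order_eq_zero.mp (hlt _ h))

theorem order_eq_neg_of_mul_eq_one [AddCommGroup Γ] [LinearOrder Γ] [IsOrderedAddMonoid Γ]
    [Ring R] [NoZeroDivisors R] [Nontrivial R] {x y : HahnSeries Γ R} (h : x * y = 1) :
    y.order = -x.order := by
  have hxy := order_mul_of_ne_zero (mul_ne_zero
    (leadingCoeff_ne_zero.mpr (left_ne_zero_of_mul_eq_one h))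
    (leadingCoeff_ne_zero.mpr (right_ne_zero_of_mul_eq_one h)))
  rw [h, order_one] at hxy
  exact eq_neg_of_add_eq_zero_right hxy.symm

end HahnSeries

namespace LaurentSeries

variable {K : Type*} [Field K]

def SuppDvdBelow (d : ℕ) (m : ℤ) (x : LaurentSeries K) : Prop :=
  ∀ n : ℤ, x.coeff n ≠ 0 → ¬ (d : ℤ) ∣ n → m ≤ n

namespace SuppDvdBelow

variable {x y : LaurentSeries K} {d : ℕ} {m : ℤ}

theorem of_mul_eq_one (hxy : x * y = 1) (hd : (d : ℤ) ∣ x.order) (hx : SuppDvdBelow d m x) :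
    SuppDvdBelow d (m - 2 * x.order) y := by
  set a := x.order
  have hyo : y.order = -a := HahnSeries.order_eq_neg_of_mul_eq_one hxy
  intro n hn hdn
  by_contra! hlt
  obtain ⟨n₀, ⟨hn₀, hdn₀, hlt₀⟩, hmin⟩ := Int.exists_least_of_bdd
    (P := fun n => y.coeff n ≠ 0 ∧ ¬ (d : ℤ) ∣ n ∧ n < m - 2 * a)
    ⟨-a, fun z hz => hyo ▸ HahnSeries.order_le_of_coeff_ne_zero hz.1⟩ ⟨n, hn, hdn, hlt⟩
  have hprod : (x * y).coeff (a + n₀) = x.coeff a * y.coeff n₀ := by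
    refine HahnSeries.coeff_mul_eq_mul_of_unique fun i j hi hj hij => ?_
    have hai : a ≤ i := HahnSeries.order_le_of_coeff_ne_zero hi
    have haj : -a ≤ j := hyo ▸ HahnSeries.order_le_of_coeff_ne_zero hj
    by_cases hdj : (d : ℤ) ∣ j
    · have := hx i hi fun hdi => hdn₀ (by
        rw [show n₀ = i + j - a by omega]; exact (hdi.add hdj).sub hd)
      omega
    · have := hmin j ⟨hj, hdj, by omega⟩
      omega
  rw [hxy, HahnSeries.coeff_one, if_neg fun h => hdn₀ (by
    rw [show n₀ = -a by omega]; exact dvd_neg.mpr hd)] at hprod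
  exact mul_ne_zero (mt HahnSeries.coeff_order_eq_zero.mp (left_ne_zero_of_mul_eq_one hxy)) hn₀
    hprod.symm

theorem coeff_ne_zero_of_mul_eq_one (hxy : x * y = 1) (hd : (d : ℤ) ∣ x.order)
    (hdm : ¬ (d : ℤ) ∣ m) (hx : SuppDvdBelow d m x) (hxm : x.coeff m ≠ 0) :
    y.coeff (m - 2 * x.order) ≠ 0 := by
  set a := x.order
  have hyo : y.order = -a := HahnSeries.order_eq_neg_of_mul_eq_one hxy
  have hy := hx.of_mul_eq_one hxy hd
  intro hzero
  have hprod : (x * y).coeff (m + -a) = x.coeff m * y.coeff (-a) := by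
    refine HahnSeries.coeff_mul_eq_mul_of_unique fun i j hi hj hij => ?_
    have hai : a ≤ i := HahnSeries.order_le_of_coeff_ne_zero hi
    have haj : -a ≤ j := hyo ▸ HahnSeries.order_le_of_coeff_ne_zero hj
    by_cases hdj : (d : ℤ) ∣ j
    · have := hx i hi fun hdi => hdm (by
        rw [show m = i + j + a by omega]; exact (hdi.add hdj).add hd)
      omega
    · have := hy j hj hdj
      exact (hj (by rwa [show j = m - 2 * a by omega])).elim
  have hya : y.coeff (-a) ≠ 0 :=
    hyo ▸ mt HahnSeries.coeff_order_eq_zero.mp (right_ne_zero_of_mul_eq_one hxy)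
  rw [hxy, HahnSeries.coeff_one, if_neg fun h => hdm (by rw [show m = a by omega]; exact hd)]
    at hprod
  exact mul_ne_zero hxm hya hprod.symm

end SuppDvdBelow

end LaurentSeries

namespace PowerSeries

variable {K : Type*} [Field K]

def SuppDvdBelow (d V : ℕ) (u : PowerSeries K) : Prop :=
  ∀ n : ℕ, coeff n u ≠ 0 → ¬ d ∣ n → V ≤ n

theorem coeff_X_mul_pow (u : PowerSeries K) (k n : ℕ) :
    coeff n ((X * u) ^ k) = if k ≤ n then coeff (n - k) (u ^ k) else 0 := by
  rw [mul_pow, coeff_X_pow_mul']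

theorem coeff_X_mul_pow_self (u : PowerSeries K) (n : ℕ) :
    coeff n ((X * u) ^ n) = constantCoeff u ^ n := by
  rw [coeff_X_mul_pow, if_pos le_rfl, Nat.sub_self, coeff_zero_eq_constantCoeff_apply, map_pow]

theorem coeff_eq_zero_of_X_pow_mul_eq_neg {p : ℕ} {w Z : PowerSeries K}
    (hrel : X ^ p * w = -Z) {k : ℕ} (hk : k < p) : coeff k Z = 0 := by
  rw [← neg_neg Z, ← hrel, map_neg, coeff_X_pow_mul', if_neg (by omega), neg_zero]

theorem coeff_add_of_X_pow_mul_eq_neg {p : ℕ} {w Z : PowerSeries K}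
    (hrel : X ^ p * w = -Z) (n : ℕ) : coeff (p + n) Z = -coeff n w := by
  rw [← neg_neg Z, ← hrel, map_neg, coeff_X_pow_mul', if_pos (by omega), Nat.add_sub_cancel_left]

namespace SuppDvdBelow

variable {d V : ℕ} {u w : PowerSeries K}

theorem coeff_eq_zero (h : SuppDvdBelow d V u) {n : ℕ} (hdn : ¬ d ∣ n) (hn : n < V) :
    coeff n u = 0 := by
  by_contra hne
  exact absurd (h n hne hdn) (by omega)

theorem of_coeff_eq_zero (h : ∀ n < V, ¬ d ∣ n → coeff n u = 0) : SuppDvdBelow d V u :=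
  fun n hn hdn => not_lt.mp fun hnV => hn (h n hnV hdn)

theorem one : SuppDvdBelow d V (1 : PowerSeries K) := by
  intro n hn hdn
  rw [coeff_one] at hn
  split_ifs at hn with h
  · exact absurd (h ▸ dvd_zero d) hdn
  · exact absurd rfl hn

theorem mul (hu : SuppDvdBelow d V u) (hw : SuppDvdBelow d V w) : SuppDvdBelow d V (u * w) := by
  intro n hn hdn
  rw [coeff_mul] at hn
  obtain ⟨⟨i, j⟩, hij, hne⟩ := Finset.exists_ne_zero_of_sum_ne_zero hn
  rw [Finset.HasAntidiagonal.mem_antidiagonal] at hij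
  by_cases hdi : d ∣ i
  · have := hw j (right_ne_zero_of_mul hne) fun hdj => hdn (hij ▸ hdi.add hdj)
    omega
  · have := hu i (left_ne_zero_of_mul hne) hdi
    omega

theorem pow (h : SuppDvdBelow d V u) (m : ℕ) : SuppDvdBelow d V (u ^ m) := by
  induction m with
  | zero => simpa using one
  | succ m ih => rw [pow_succ]; exact ih.mul h

theorem of_neg (h : SuppDvdBelow d V (-u)) : SuppDvdBelow d V u :=
  fun n hn => h n (by simpa using hn)

theorem of_X_pow_mul {p : ℕ} (h : SuppDvdBelow d (p + V) (X ^ p * u)) (hdp : d ∣ p) :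
    SuppDvdBelow d V u := by
  intro n hn hdn
  have := h (p + n) (by rwa [coeff_X_pow_mul', if_pos (by omega), Nat.add_sub_cancel_left])
    fun hd => hdn ((Nat.dvd_add_right hdp).mp hd)
  omega

theorem coeff_pow (h : SuppDvdBelow d V u) (hdV : ¬ d ∣ V) (m : ℕ) :
    constantCoeff u * coeff V (u ^ m) = m * constantCoeff u ^ m * coeff V u := by
  have hV : V ≠ 0 := by rintro rfl; exact hdV (dvd_zero d)
  induction m with
  | zero => simp [coeff_one, hV]
  | succ m ih =>
    have hsplit : coeff V (u ^ m * u) =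
        coeff V (u ^ m) * constantCoeff u + constantCoeff u ^ m * coeff V u := by
      rw [coeff_mul, Finset.sum_eq_add_of_mem (V, 0) (0, V) (by simp) (by simp) (by simp [hV])]
      · simp [coeff_zero_eq_constantCoeff_apply]
      · rintro ⟨i, j⟩ hij hne
        simp only [ne_eq, Prod.mk.injEq] at hne
        rw [Finset.HasAntidiagonal.mem_antidiagonal] at hij
        by_cases hdi : d ∣ i
        · rw [h.coeff_eq_zero (fun hdj => hdV (hij ▸ hdi.add hdj)) (by omega), mul_zero]
        · rw [(h.pow m).coeff_eq_zero hdi (by omega), zero_mul]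
    rw [pow_succ, hsplit]
    push_cast
    linear_combination constantCoeff u * ih

theorem of_pow [CharZero K] {m : ℕ} (hm : m ≠ 0) (hu0 : constantCoeff u ≠ 0)
    (h : SuppDvdBelow d V (u ^ m)) : SuppDvdBelow d V u := by
  refine of_coeff_eq_zero fun n => ?_
  induction n using Nat.strong_induction_on with
  | _ n ih =>
    intro hnV hdn
    have hbelow : SuppDvdBelow d n u := of_coeff_eq_zero fun k hk => ih k hk (by omega)
    have hcoeff := hbelow.coeff_pow hdn m
    rw [h.coeff_eq_zero hdn hnV, mul_zero] at hcoeff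
    exact (mul_eq_zero.mp hcoeff.symm).resolve_left
      (mul_ne_zero (Nat.cast_ne_zero.mpr hm) (pow_ne_zero _ hu0))

theorem coeff_X_mul_pow_eq_zero (h : SuppDvdBelow d V u) {k n : ℕ} (hdk : d ∣ k)
    (hdn : ¬ d ∣ n) (hnk : n < k + V) : coeff n ((X * u) ^ k) = 0 := by
  rw [coeff_X_mul_pow]
  split_ifs with hkn
  · refine (h.pow k).coeff_eq_zero (fun hd => hdn ?_) (by omega)
    simpa [Nat.sub_add_cancel hkn] using hd.add hdk
  · rfl

end SuppDvdBelow

end PowerSeries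

theorem LaurentSeries.suppDvdBelow_ofPowerSeries_iff {K : Type*} [Field K] {d m : ℕ}
    {u : PowerSeries K} :
    SuppDvdBelow d m (HahnSeries.ofPowerSeries ℤ K u) ↔ PowerSeries.SuppDvdBelow d m u := by
  constructor
  · intro h n hn hdn
    exact_mod_cast h n (by rwa [HahnSeries.ofPowerSeries_apply_coeff]) (by exact_mod_cast hdn)
  · intro h n hn hdn
    rw [PowerSeries.coeff_coe] at hn
    split_ifs at hn with hneg
    · exact absurd rfl hn
    · lift n to ℕ using not_lt.mp hneg
      exact_mod_cast h n hn (by exact_mod_cast hdn)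

namespace Composed

open PowerSeries

variable {K : Type*} [Field K] {u Y Z : PowerSeries K}

theorem coeff_eq_of_forall_lt (h : Composed (X * u) Y Z) {n : ℕ}
    (hY : ∀ k < n, coeff k Y = 0) : coeff n Z = constantCoeff u ^ n * coeff n Y := by
  rw [h n, Finset.sum_eq_single n (fun k hk hkn => ?_) (by simp), coeff_X_mul_pow_self, mul_comm]
  rw [hY k (by rw [Finset.mem_range] at hk; omega), zero_mul]

theorem coeff_eq_zero_of_lt (h : Composed (X * u) Y Z) (hu0 : constantCoeff u ≠ 0) {p : ℕ}
    (hZ : ∀ k < p, coeff k Z = 0) : ∀ k < p, coeff k Y = 0 := by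
  intro n
  induction n using Nat.strong_induction_on with
  | _ n ih =>
    intro hn
    have hcoeff := h.coeff_eq_of_forall_lt fun k hk => ih k hk (by omega)
    rw [hZ n hn] at hcoeff
    exact (mul_eq_zero.mp hcoeff.symm).resolve_left (pow_ne_zero _ hu0)

variable {d p V : ℕ}

theorem suppDvdBelow (h : Composed (X * u) Y Z) (hu0 : constantCoeff u ≠ 0)
    (hu : SuppDvdBelow d V u) (hY : ∀ k < p, coeff k Y = 0) (hZ : SuppDvdBelow d (p + V) Z) :
    SuppDvdBelow d (p + V) Y := by
  refine .of_coeff_eq_zero fun n => ?_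
  induction n using Nat.strong_induction_on with
  | _ n ih =>
    intro hnV hdn
    have hsum : coeff n Z = coeff n Y * coeff n ((X * u) ^ n) := by
      refine (h n).trans (Finset.sum_eq_single n (fun k hk hkn => ?_) (by simp))
      rw [Finset.mem_range] at hk
      rcases lt_or_ge k p with hkp | hkp
      · rw [hY k hkp, zero_mul]
      by_cases hdk : d ∣ k
      · rw [hu.coeff_X_mul_pow_eq_zero hdk hdn (by omega), mul_zero]
      · rw [ih k (by omega) (by omega) hdk, zero_mul]
    rw [hZ.coeff_eq_zero hdn hnV, coeff_X_mul_pow_self] at hsum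
    exact (mul_eq_zero.mp hsum.symm).resolve_right (pow_ne_zero _ hu0)

theorem coeff_add (h : Composed (X * u) Y Z) (hu : SuppDvdBelow d V u)
    (hY : ∀ k < p, coeff k Y = 0) (hYd : SuppDvdBelow d (p + V) Y) (hdp : d ∣ p)
    (hdV : ¬ d ∣ V) :
    coeff (p + V) Z =
      coeff p Y * coeff V (u ^ p) + coeff (p + V) Y * constantCoeff u ^ (p + V) := by
  have hdJ : ¬ d ∣ p + V := fun hd => hdV ((Nat.dvd_add_right hdp).mp hd)
  have hV : V ≠ 0 := by rintro rfl; exact hdV (dvd_zero d)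
  rw [h (p + V), Finset.sum_eq_add_of_mem p (p + V) (by simp) (by simp) (by omega),
    coeff_X_mul_pow, if_pos (by omega), Nat.add_sub_cancel_left, coeff_X_mul_pow_self]
  rintro k hk ⟨hkp, hkJ⟩
  rw [Finset.mem_range] at hk
  rcases lt_or_ge k p with hkp' | hkp'
  · rw [hY k hkp', zero_mul]
  by_cases hdk : d ∣ k
  · rw [hu.coeff_X_mul_pow_eq_zero hdk hdJ (by omega), mul_zero]
  · rw [hYd.coeff_eq_zero hdk (by omega), zero_mul]

theorem suppDvdBelow_and_coeff_ne_zero [CharZero K] (h : Composed (X * u) Y Z)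
    (hu0 : constantCoeff u ≠ 0) {q : ℕ} (hq : q ≠ 0) (hrel : X ^ p * u ^ (p + q) = -Z)
    (hdp : d ∣ p) (hdV : ¬ d ∣ V) (hZ : SuppDvdBelow d (p + V) Z)
    (hZV : coeff (p + V) Z ≠ 0) :
    SuppDvdBelow d (p + V) Y ∧ coeff (p + V) Y ≠ 0 := by
  have hZeq : Z = -(X ^ p * u ^ (p + q)) := by rw [hrel, neg_neg]
  have hZshift := coeff_add_of_X_pow_mul_eq_neg hrel
  have hu : SuppDvdBelow d V u :=
    ((hZeq ▸ hZ).of_neg.of_X_pow_mul hdp).of_pow (by omega) hu0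
  have hYlow := h.coeff_eq_zero_of_lt hu0 fun k => coeff_eq_zero_of_X_pow_mul_eq_neg hrel
  have hY := h.suppDvdBelow hu0 hu hYlow hZ
  refine ⟨hY, fun hYV => hZV ?_⟩
  have hZp := h.coeff_eq_of_forall_lt hYlow
  have hZV' := h.coeff_add hu hYlow hY hdp hdV
  have hZ0 := hZshift 0
  rw [add_zero, coeff_zero_eq_constantCoeff_apply, map_pow] at hZ0
  have hpow_p := hu.coeff_pow hdV p
  have hpow_pq := hu.coeff_pow hdV (p + q)
  rw [hYV, zero_mul, add_zero] at hZV'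
  -- comparing the two expressions for `coeff (p + V) Z` leaves `q * coeff V u = 0`
  have huV : (q : K) * constantCoeff u ^ (p + q) * coeff V u = 0 := by
    push_cast at hpow_pq
    linear_combination -hpow_pq + constantCoeff u * hZshift V - constantCoeff u * hZV'
      - coeff p Y * hpow_p + p * coeff V u * hZp - p * coeff V u * hZ0
  have huV' : coeff V u = 0 := by simpa [hq, hu0] using huV
  rw [huV', mul_zero] at hpow_p
  have hcZ : constantCoeff u * coeff (p + V) Z = 0 := by
    rw [hZV']; linear_combination coeff p Y * hpow_p
  exact (mul_eq_zero.mp hcZ).resolve_left hu0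

end Composed

structure DualCharStep (supp : ℤ → Prop) (d b d' : ℕ) : Prop where
  mem : supp (-(b : ℤ))
  not_dvd : ¬ (d : ℤ) ∣ b
  le_of_not_dvd : ∀ i : ℤ, supp i → ¬ (d : ℤ) ∣ i → -(b : ℤ) ≤ i
  gcd_eq : d' = Nat.gcd d b

namespace DualCharStep

variable {supp : ℤ → Prop} {d b d' p : ℕ}

theorem le (h : DualCharStep supp d b d') (hlow : ∀ i, supp i → -(p : ℤ) ≤ i) : b ≤ p := by
  have := hlow _ h.mem
  omega

theorem dvd_of_lt (h : DualCharStep supp d b d') (hmem : supp (-(p : ℤ))) (hb : b < p) :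
    d ∣ p := by
  by_contra hdp
  have := h.le_of_not_dvd _ hmem (by rwa [Int.dvd_neg, Int.natCast_dvd_natCast])
  omega

theorem of_isLeast (hlow : ∀ i, supp i → -(p : ℤ) ≤ i) (hmem : supp (-(p : ℤ)))
    (hdp : ¬ (d : ℤ) ∣ p) (hgcd : d' = Nat.gcd d p) : DualCharStep supp d p d' :=
  ⟨hmem, hdp, fun i hi _ => hlow i hi, hgcd⟩

end DualCharStep

theorem dualChar_iff {q g : ℕ} {supp : ℤ → Prop} {β e : ℕ → ℕ} :
    DualChar q supp g β e ↔
      e 0 = q ∧ e g = 1 ∧ ∀ k < g, DualCharStep supp (e k) (β (k + 1)) (e (k + 1)) := by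
  refine and_congr_right fun _ => and_congr_right fun _ => forall₂_congr fun k _ => ?_
  exact ⟨fun ⟨h1, h2, h3, h4⟩ => ⟨h1, h2, h3, h4⟩, fun ⟨h1, h2, h3, h4⟩ => ⟨h1, h2, h3, h4⟩⟩

namespace DualChar

variable {q g : ℕ} {supp : ℤ → Prop} {β e : ℕ → ℕ}

theorem update_zero {N : ℕ} (h : DualChar q supp g β e) (hg : 0 < g)
    (h0 : DualCharStep supp N (β 1) (e 1)) :
    DualChar N supp g β (fun j => if j = 0 then N else e j) := by
  obtain ⟨-, heg, hstep⟩ := dualChar_iff.mp h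
  refine dualChar_iff.mpr ⟨if_pos rfl, by simpa [hg.ne'] using heg, fun k hk => ?_⟩
  rcases k with _ | k
  · simpa using h0
  · simpa using hstep (k + 1) hk

theorem cons {N b : ℕ} (h : DualChar q supp g β e) (h0 : DualCharStep supp N b q) :
    DualChar N supp (g + 1) (fun k => if k = 1 then b else β (k - 1))
      (fun j => if j = 0 then N else e (j - 1)) := by
  obtain ⟨he0, heg, hstep⟩ := dualChar_iff.mp h
  refine dualChar_iff.mpr ⟨if_pos rfl, by simpa using heg, fun k hk => ?_⟩
  rcases k with _ | k
  · simpa [he0] using h0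
  · simpa using hstep k (by omega)

theorem exists_add_of_isLeast {p : ℕ} (h : DualChar q supp g β e) (hg : 0 < g) (hp : 0 < p)
    (hq : 0 < q) (hlow : ∀ i, supp i → -(p : ℤ) ≤ i) (hmem : supp (-(p : ℤ))) :
    (p = β 1 → ∃ e' : ℕ → ℕ, DualChar (p + q) supp g β e') ∧
    (p ≠ β 1 → ∃ e' : ℕ → ℕ, DualChar (p + q) supp (g + 1)
      (fun k => if k = 1 then p else β (k - 1)) e') := by
  obtain ⟨he0, -, hstep⟩ := dualChar_iff.mp h
  have h0 := hstep 0 hg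
  rw [he0] at h0
  have hlead : ¬ ((p + q : ℕ) : ℤ) ∣ p := fun hdvd => by
    have := Int.le_of_dvd (by omega) hdvd
    omega
  refine ⟨fun hpβ => ⟨_, h.update_zero hg ?_⟩, fun hpβ => ⟨_, h.cons ?_⟩⟩
  · rw [← hpβ] at h0 ⊢
    exact .of_isLeast hlow hmem hlead (by rw [h0.gcd_eq, Nat.gcd_self_add_left])
  · have hqp : q ∣ p := h0.dvd_of_lt hmem ((h0.le hlow).lt_of_ne (Ne.symm hpβ))
    exact .of_isLeast hlow hmem hlead (by rw [Nat.gcd_self_add_left, Nat.gcd_eq_left hqp])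

end DualChar

section

open PowerSeries

variable {K : Type*} [Field K]

theorem X_pow_mul_pow_eq_neg {p q : ℕ} {F : LaurentSeries K} {u Yf : PowerSeries K}
    (hYf : HahnSeries.ofPowerSeries ℤ K Yf * F = 1)
    (hS : HahnSeries.ofPowerSeries ℤ K (X * u) ^ (p + q) * F = -HahnSeries.single (q : ℤ) 1) :
    X ^ p * u ^ (p + q) = -Yf := by
  have hpow : (X * u) ^ (p + q) = -(X ^ q * Yf) := by
    apply HahnSeries.ofPowerSeries_injective (Γ := ℤ)
    calc HahnSeries.ofPowerSeries ℤ K ((X * u) ^ (p + q))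
        = HahnSeries.ofPowerSeries ℤ K (X * u) ^ (p + q) * F *
            HahnSeries.ofPowerSeries ℤ K Yf := by
          rw [mul_assoc, mul_comm F, hYf, mul_one, map_pow]
      _ = HahnSeries.ofPowerSeries ℤ K (-(X ^ q * Yf)) := by
          rw [hS, map_neg, map_mul, HahnSeries.ofPowerSeries_X_pow, neg_mul]
  apply mul_left_cancel₀ (pow_ne_zero q X_ne_zero)
  linear_combination hpow

theorem Composed.order_ofPowerSeries {p q : ℕ} {u Y Z : PowerSeries K}
    (h : Composed (X * u) Y Z) (hu0 : constantCoeff u ≠ 0) (hrel : X ^ p * u ^ (p + q) = -Z) :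
    (HahnSeries.ofPowerSeries ℤ K Y).order = p := by
  have hYlow := h.coeff_eq_zero_of_lt hu0 fun k => coeff_eq_zero_of_X_pow_mul_eq_neg hrel
  have hZp := coeff_add_of_X_pow_mul_eq_neg hrel 0
  rw [add_zero, h.coeff_eq_of_forall_lt hYlow, coeff_zero_eq_constantCoeff_apply, map_pow] at hZp
  refine HahnSeries.order_eq_of_forall_lt (fun n hn => ?_) ?_
  · rw [coeff_coe]
    split_ifs
    · rfl
    · exact hYlow _ (by omega)
  · rw [HahnSeries.ofPowerSeries_apply_coeff]
    intro hY
    rw [hY, mul_zero, zero_eq_neg] at hZp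
    exact pow_ne_zero _ hu0 hZp

theorem LaurentSeries.SuppDvdBelow.of_composed [CharZero K] {p q d b : ℕ}
    {F G : LaurentSeries K} {u Yf Yg : PowerSeries K} (hq : q ≠ 0) (hFord : F.order = -p)
    (hYf : HahnSeries.ofPowerSeries ℤ K Yf * F = 1) (hYg : HahnSeries.ofPowerSeries ℤ K Yg * G = 1)
    (hYgord : (HahnSeries.ofPowerSeries ℤ K Yg).order = p) (hcomp : Composed (X * u) Yg Yf)
    (hu0 : constantCoeff u ≠ 0) (hrel : X ^ p * u ^ (p + q) = -Yf)
    (hdp : d ∣ p) (hdb : ¬ d ∣ b) (hb : b < p)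
    (hF : SuppDvdBelow d (-b) F) (hFb : F.coeff (-b) ≠ 0) :
    SuppDvdBelow d (-b) G ∧ G.coeff (-b) ≠ 0 := by
  have hdV : ¬ d ∣ p - b :=
    fun hd => hdb (by simpa [Nat.sub_sub_self hb.le] using Nat.dvd_sub hdp hd)
  have hdJ : ¬ (d : ℤ) ∣ ((p + (p - b) : ℕ) : ℤ) :=
    fun hd => hdV ((Nat.dvd_add_right hdp).mp (Int.natCast_dvd_natCast.mp hd))
  have hdpZ : (d : ℤ) ∣ p := Int.natCast_dvd_natCast.mpr hdp
  have hFYf : F * HahnSeries.ofPowerSeries ℤ K Yf = 1 := by rw [mul_comm, hYf]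
  have hdF : (d : ℤ) ∣ F.order := hFord ▸ dvd_neg.mpr hdpZ
  have hdb' : ¬ (d : ℤ) ∣ -(b : ℤ) := by rwa [Int.dvd_neg, Int.natCast_dvd_natCast]
  have hJF : -(b : ℤ) - 2 * F.order = ((p + (p - b) : ℕ) : ℤ) := by rw [hFord]; omega
  have hJG : ((p + (p - b) : ℕ) : ℤ) - 2 * (HahnSeries.ofPowerSeries ℤ K Yg).order = -b := by
    rw [hYgord]; omega
  have hYfV := hF.coeff_ne_zero_of_mul_eq_one hFYf hdF hdb' hFb
  rw [hJF, HahnSeries.ofPowerSeries_apply_coeff] at hYfV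
  have hYfd := hF.of_mul_eq_one hFYf hdF
  rw [hJF, suppDvdBelow_ofPowerSeries_iff] at hYfd
  obtain ⟨hYgd, hYgV⟩ :=
    hcomp.suppDvdBelow_and_coeff_ne_zero hu0 hq hrel hdp hdV hYfd hYfV
  rw [← suppDvdBelow_ofPowerSeries_iff] at hYgd
  rw [← HahnSeries.ofPowerSeries_apply_coeff (Γ := ℤ)] at hYgV
  have hdYg : (d : ℤ) ∣ (HahnSeries.ofPowerSeries ℤ K Yg).order := hYgord ▸ hdpZ
  exact ⟨hJG ▸ hYgd.of_mul_eq_one hYg hdYg,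
    hJG ▸ hYgd.coeff_ne_zero_of_mul_eq_one hYg hdYg hdJ hYgV⟩

end

/-- `F` and `G` are the expansions of `f` in `t = x^{1/q}` and of `g` in `s = ζ̂^{1/(p+q)}`,
where `ζ̂ = -x/f` comes from the stationary phase relation `f = -z·ẑ`: under the change of
parameter `s = S(t)` this reads `s^{p+q}·F = -t^q`, and `1/g ∘ S = 1/f` since `g = f` up to a
constant shift, which does not affect the characteristic. -/
theorem fourier_zero_inf_dualPuiseux_general {K : Type*} [Field K] [CharZero K]
    (q p : ℕ) (hq : 0 < q) (hp : 0 < p)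
    (F : LaurentSeries K)
    (hFlow : ∀ n : ℤ, n < -(p : ℤ) → F.coeff n = 0)
    (hFlead : F.coeff (-(p : ℤ)) ≠ 0)
    (g : ℕ) (hg : 0 < g) (β e : ℕ → ℕ)
    (hchar : DualChar q (fun n => F.coeff n ≠ 0) g β e)
    (G : LaurentSeries K)
    (Yf Yg : PowerSeries K)
    (hYf : (HahnSeries.ofPowerSeries ℤ K Yf : LaurentSeries K) * F = 1)
    (hYg : (HahnSeries.ofPowerSeries ℤ K Yg : LaurentSeries K) * G = 1)
    (S : PowerSeries K)
    (hS0 : PowerSeries.constantCoeff S = 0)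
    (hS1 : PowerSeries.coeff 1 S ≠ 0)
    (hSpow : (HahnSeries.ofPowerSeries ℤ K S : LaurentSeries K) ^ (p + q) * F =
      -(HahnSeries.single (q : ℤ) (1 : K)))
    (hcomp : Composed S Yg Yf) :
    G.order = -(p : ℤ) ∧
    (p = β 1 →
      ∃ e' : ℕ → ℕ, DualChar (p + q) (fun n => G.coeff n ≠ 0) g β e') ∧
    (p ≠ β 1 →
      ∃ e' : ℕ → ℕ, DualChar (p + q) (fun n => G.coeff n ≠ 0) (g + 1)
        (fun k => if k = 1 then p else β (k - 1)) e') := by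
  obtain ⟨u, rfl⟩ := PowerSeries.X_dvd_iff.mpr hS0
  have hu0 : PowerSeries.constantCoeff u ≠ 0 := by
    rwa [PowerSeries.coeff_succ_X_mul, PowerSeries.coeff_zero_eq_constantCoeff_apply] at hS1
  have hrel := X_pow_mul_pow_eq_neg hYf hSpow
  have hFord : F.order = -p := HahnSeries.order_eq_of_forall_lt hFlow hFlead
  have hYgord := hcomp.order_ofPowerSeries hu0 hrel
  have hGord : G.order = -p := by rw [HahnSeries.order_eq_neg_of_mul_eq_one hYg, hYgord]
  have hFmin : ∀ i, F.coeff i ≠ 0 → -(p : ℤ) ≤ i :=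
    fun i hi => hFord ▸ HahnSeries.order_le_of_coeff_ne_zero hi
  have hGmin : ∀ i, G.coeff i ≠ 0 → -(p : ℤ) ≤ i :=
    fun i hi => hGord ▸ HahnSeries.order_le_of_coeff_ne_zero hi
  have hGp : G.coeff (-p) ≠ 0 :=
    hGord ▸ mt HahnSeries.coeff_order_eq_zero.mp (right_ne_zero_of_mul_eq_one hYg)
  have hstep : ∀ {d b d'}, DualCharStep (fun n => F.coeff n ≠ 0) d b d' →
      DualCharStep (fun n => G.coeff n ≠ 0) d b d' := by
    intro d b d' h
    rcases (h.le hFmin).lt_or_eq with hb | rfl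
    · obtain ⟨hGd, hGb⟩ := LaurentSeries.SuppDvdBelow.of_composed hq.ne' hFord hYf hYg hYgord
        hcomp hu0 hrel (h.dvd_of_lt hFlead hb) (mt Int.natCast_dvd_natCast.mpr h.not_dvd) hb
        h.le_of_not_dvd h.mem
      exact ⟨hGb, h.not_dvd, hGd, h.gcd_eq⟩
    · exact .of_isLeast hGmin hGp h.not_dvd h.gcd_eq
  obtain ⟨he0, heg, hcharF⟩ := dualChar_iff.mp hchar
  have hcharG : DualChar q (fun n => G.coeff n ≠ 0) g β e :=
    dualChar_iff.mpr ⟨he0, heg, fun k hk => hstep (hcharF k hk)⟩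
  exact ⟨hGord, hcharG.exists_add_of_isLeast hg hp hq hGmin hGp⟩

/-- Suppose the irreducible `E_{f,q}` has dual Puiseux characteristic
`(q, p; β 1, …, β g)`.  The local Fourier transform `F^{(0,∞)}(E_{f,q}) ≅ E_{g,p+q}` is
encoded as follows: `F` is the expansion of `f` in `t = x^{1/q}` (`f` at the origin),
`G` that of `g` in `s = ζ̂^{1/(p+q)}` where `ζ̂ = -x/f` (from the stationary phase
relation `f = -z·ẑ`), so `s^{p+q}·F = -t^q` under the change of parameter `s = S(t)`,
and `1/g ∘ S = 1/f` (the relation `g = f` up to the irrelevant constant shift).  Then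
`E_{g,p+q}` has dual Puiseux characteristic `(p+q, β 1; β 1, …, β g)` if `p = β 1`,
and `(p+q, p; p, β 1, …, β g)` otherwise. -/
theorem fourier_zero_inf_dualPuiseux {K : Type*} [Field K] [CharZero K] [IsAlgClosed K]
    (q p : ℕ) (hq : 0 < q) (hp : 0 < p)
    (F : LaurentSeries K)
    (hFlow : ∀ n : ℤ, n < -(p : ℤ) → F.coeff n = 0)
    (hFlead : F.coeff (-(p : ℤ)) ≠ 0)
    (hFirr : RamIrred q q F)
    (g : ℕ) (hg : 0 < g) (β e : ℕ → ℕ)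
    (hchar : DualChar q (fun n => F.coeff n ≠ 0) g β e)
    (G : LaurentSeries K) (hG : G ≠ 0)
    (Yf Yg : PowerSeries K)
    (hYf : (HahnSeries.ofPowerSeries ℤ K Yf : LaurentSeries K) * F = 1)
    (hYg : (HahnSeries.ofPowerSeries ℤ K Yg : LaurentSeries K) * G = 1)
    (S : PowerSeries K)
    (hS0 : PowerSeries.constantCoeff S = 0)
    (hS1 : PowerSeries.coeff 1 S ≠ 0)
    (hSpow : (HahnSeries.ofPowerSeries ℤ K S : LaurentSeries K) ^ (p + q) * F =
      -(HahnSeries.single (q : ℤ) (1 : K)))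
    (hcomp : Composed S Yg Yf) :
    G.order = -(p : ℤ) ∧
    (p = β 1 →
      ∃ e' : ℕ → ℕ, DualChar (p + q) (fun n => G.coeff n ≠ 0) g β e') ∧
    (p ≠ β 1 →
      ∃ e' : ℕ → ℕ, DualChar (p + q) (fun n => G.coeff n ≠ 0) (g + 1)
        (fun k => if k = 1 then p else β (k - 1)) e') :=
  fourier_zero_inf_dualPuiseux_general q p hq hp F hFlow hFlead g hg β e hchar G Yf Yg hYf hYg S hS0
    hS1 hSpow hcomp
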